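/- arXiv:1506.00928 — 4 statements merged into one kernel-verified Lean document; each statement's English description precedes it below -/
import Mathlib

section
/- Let c_1, c_2, ..., c_r be disjoint forward cycles on subsets of {1,...,k} whose supports form a noncrossing partition of {1,...,k}, and let f = (1 2 ... k) be the full forward cycle. Then the product c_1^{-2} c_2^{-2} ... c_r^{-2} f is a single cycle on {1,...,k} (i.e., it acts transitively on {1,...,k}). -/
/-!
Write `c` for the product of the forward cycles of the blocks and `f_S` for the forward cycle on
the union `S` of the blocks; we show by induction on `S` that `c⁻¹ c⁻¹ f_S` is a cyclic
permutation of `S`. A block `B` of minimal diameter contains every point of `S` lying between two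
of its points. Let `v = max B`. Removing `v` from its cycle turns a permutation `σ` into
`σ * swap (σ⁻¹ v) v`, so `c = c' * swap u v` and `f_S = f_{S'} * swap w v`, where `u` and `w` are
the predecessors of `v` in `B` and in `S`. Either `B = {v}`, and then `c⁻¹ c⁻¹ f_S` is the inductive
cycle `c'⁻¹ c'⁻¹ f_{S'}` times `swap w v`; or `u = w` by convexity, and then `c⁻¹ c⁻¹ f_S` is
conjugate by `swap u v` to `swap v (c'⁻¹ u) * c'⁻¹ c'⁻¹ f_{S'}`. Either way one transposition
splices `v` into the inductive cycle.
-/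

open Equiv

/-- Word metric on the symmetric group induced by the set of all transpositions:
`trdist a b` is the minimal number of transpositions whose product is `a⁻¹ * b`. -/
noncomputable def trdist {n : ℕ} (a b : Equiv.Perm (Fin n)) : ℕ :=
  sInf {k | ∃ l : List (Equiv.Perm (Fin n)), l.length = k ∧ (∀ t ∈ l, t.IsSwap) ∧ l.prod = a⁻¹ * b}

/-- The set of midpoints of `a` and `b`. -/
noncomputable def midpts {n : ℕ} (a b : Equiv.Perm (Fin n)) : Set (Equiv.Perm (Fin n)) :=
  {m | trdist a m + trdist m b = trdist a b ∧ |(trdist a m : ℤ) - (trdist m b : ℤ)| ≤ 1}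

/-- The forward cycle on a finite subset: cycles through its elements in increasing order. -/
def fwdCycle {n : ℕ} (s : Finset (Fin n)) : Equiv.Perm (Fin n) :=
  (s.sort (· ≤ ·)).formPerm

/-- The increasing list of minima of the cycles (orbits, including fixed points) of `p`. -/
noncomputable def cycleMins {n : ℕ} (p : Equiv.Perm (Fin n)) : List (Fin n) :=
  Finset.sort
    (@Finset.filter _ (fun i => ∀ j, p.SameCycle i j → i ≤ j) (Classical.decPred _) Finset.univ)
    (· ≤ ·)

/-- The number of orbits (cycles, including fixed points) of `p` acting on `Fin n`. -/
noncomputable def cycleCount {n : ℕ} (p : Equiv.Perm (Fin n)) : ℕ :=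
  (cycleMins p).length

/-- The ordered cycle type of `p`: the list of cycle (orbit) lengths of `p`,
ordered by increasing cycle minima. -/
noncomputable def orderedCycleType {n : ℕ} (p : Equiv.Perm (Fin n)) : List ℕ :=
  (cycleMins p).map (fun i =>
    (@Finset.filter _ (fun j => p.SameCycle i j) (Classical.decPred _) Finset.univ).card)

/-- The canonical permutation with ordered cycle type `μ` (starting at offset `off`):
it cyclically permutes the first `μ₁` points in increasing order, then the next `μ₂` points,
and so on. -/
def canonPerm (n : ℕ) : List ℕ → ℕ → Equiv.Perm (Fin n)
  | [], _ => 1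
  | m :: rest, off =>
      fwdCycle ((Finset.univ : Finset (Fin n)).filter (fun i => off ≤ i.val ∧ i.val < off + m)) *
        canonPerm n rest (off + m)

/-- `u` conjugates `p` into `q` and maps the sequence of cycle minima of `p`
to that of `q`, entrywise in order. -/
noncomputable def IsConjugator {n : ℕ} (p q u : Equiv.Perm (Fin n)) : Prop :=
  u * p * u⁻¹ = q ∧ (cycleMins p).map u = cycleMins q

/-- A list of blocks is noncrossing: there are no `a < b < c < d` with `a, c` in one block
and `b, d` in a different block. -/
def NoncrossingList {n : ℕ} (L : List (Finset (Fin n))) : Prop :=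
  ¬ ∃ a b c d : Fin n, a < b ∧ b < c ∧ c < d ∧
    ∃ s ∈ L, ∃ t ∈ L, s ≠ t ∧ a ∈ s ∧ c ∈ s ∧ b ∈ t ∧ d ∈ t

/-- The set of all midpoints of pairs `(a, b) ∈ A × B`. -/
noncomputable def midSet {n : ℕ} (A B : Finset (Equiv.Perm (Fin n))) :
    Finset (Equiv.Perm (Fin n)) :=
  @Finset.filter _ (fun m => ∃ a ∈ A, ∃ b ∈ B, m ∈ midpts a b) (Classical.decPred _) Finset.univ

/-- The distance between two sets of permutations. -/
noncomputable def setDist {n : ℕ} (A B : Finset (Equiv.Perm (Fin n))) : ℕ :=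
  sInf {k | ∃ a ∈ A, ∃ b ∈ B, trdist a b = k}

/-- The embedding of the hypercube `Z₂^N` into `S(n)` (for `2N ≤ n`) sending the `i`-th
standard basis vector to the transposition of `2i` and `2i+1` (0-indexed). -/
def cubeMap (N n : ℕ) (h : 2 * N ≤ n) (x : Fin N → ZMod 2) : Equiv.Perm (Fin n) :=
  ((List.finRange N).map (fun i =>
    if x i = 1 then
      Equiv.swap (⟨2 * i.val, by have := i.isLt; omega⟩ : Fin n)
        ⟨2 * i.val + 1, by have := i.isLt; omega⟩
    else 1)).prod

namespace List

theorem exists_isRotated_cons {α : Type*} {l : List α} {a : α} (ha : a ∈ l) : ∃ t, l ~r a :: t := by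
  obtain ⟨l₁, l₂, rfl⟩ := append_of_mem ha
  exact ⟨l₂ ++ l₁, isRotated_append⟩

variable {α : Type*} [DecidableEq α]

theorem formPerm_map (e : Equiv.Perm α) (l : List α) :
    (l.map e).formPerm = e * l.formPerm * e⁻¹ := by
  induction l with
  | nil => simp
  | cons a l ih =>
    cases l with
    | nil => simp
    | cons b l =>
      rw [map_cons, map_cons, formPerm_cons_cons, ← map_cons, ih, formPerm_cons_cons,
        swap_apply_apply]
      group

theorem formPerm_eq_formPerm_erase_mul_swap {l : List α} (hl : l.Nodup) (v : α) :
    l.formPerm = (l.erase v).formPerm * Equiv.swap (l.formPerm⁻¹ v) v := by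
  by_cases hv : v ∈ l
  -- rotate `v` to the end of the list, where `formPerm_append_pair` applies
  · obtain ⟨l₁, l₂, rfl⟩ := append_of_mem hv
    have hv₁ : v ∉ l₁ := fun h => (nodup_append.1 hl).2.2 v h v mem_cons_self rfl
    have hrot : l₁ ++ v :: l₂ ~r (l₂ ++ l₁) ++ [v] := by
      simpa using isRotated_append (l := l₁ ++ [v]) (l' := l₂)
    rw [erase_append_right _ hv₁, erase_cons_head, formPerm_eq_of_isRotated hl hrot,
      formPerm_eq_of_isRotated (l := l₁ ++ l₂) (hl.sublist (by simp)) isRotated_append]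
    have hnd := hrot.nodup_iff.1 hl
    generalize l₂ ++ l₁ = t at hnd ⊢
    rcases eq_nil_or_concat' t with rfl | ⟨t, w, rfl⟩
    · simp [Equiv.Perm.one_def]
    have hvt : v ∉ t ++ [w] := fun h => (nodup_append.1 hnd).2.2 v h v (mem_singleton_self v) rfl
    have hw : (t ++ [w, v]).formPerm w = v := by
      rw [formPerm_append_pair, Equiv.Perm.mul_apply, Equiv.swap_apply_left,
        formPerm_apply_of_notMem hvt]
    rw [append_assoc, singleton_append, Equiv.Perm.inv_eq_iff_eq.2 hw.symm, formPerm_append_pair]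
  · rw [erase_of_not_mem hv, Equiv.Perm.inv_eq_iff_eq.2 (formPerm_apply_of_notMem hv).symm,
      Equiv.swap_self, ← Equiv.Perm.one_def, mul_one]

end List

namespace Equiv.Perm

variable {α : Type*} [DecidableEq α]

def IsFullCycleOn (σ : Perm α) (s : Finset α) : Prop :=
  ∃ l : List α, l.Nodup ∧ l.toFinset = s ∧ l.formPerm = σ

namespace IsFullCycleOn

variable {σ : Perm α} {s : Finset α}

theorem isCycleOn (h : IsFullCycleOn σ s) : σ.IsCycleOn s := by
  obtain ⟨l, hl, rfl, rfl⟩ := h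
  convert hl.isCycleOn_formPerm using 1
  ext; simp

theorem swap_mul (h : IsFullCycleOn σ s) {p v : α} (hp : p ∈ s) (hv : v ∉ s) :
    IsFullCycleOn (swap v p * σ) (insert v s) := by
  obtain ⟨l, hl, rfl, rfl⟩ := h
  obtain ⟨t, ht⟩ := List.exists_isRotated_cons (List.mem_toFinset.1 hp)
  refine ⟨v :: p :: t, ?_, ?_, ?_⟩
  · exact List.nodup_cons.2 ⟨fun h => hv (List.mem_toFinset.2 (ht.mem_iff.2 h)), ht.nodup_iff.1 hl⟩
  · rw [List.toFinset_cons, List.toFinset_eq_of_perm _ _ ht.perm]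
  · rw [List.formPerm_cons_cons, List.formPerm_eq_of_isRotated hl ht]

theorem swap_conj (h : IsFullCycleOn σ s) {u v : α} (hu : u ∈ s) (hv : v ∈ s) :
    IsFullCycleOn (swap u v * σ * swap u v) s := by
  obtain ⟨l, hl, rfl, rfl⟩ := h
  refine ⟨l.map (swap u v), hl.map (swap u v).injective, ?_, ?_⟩
  · ext x
    rw [List.mem_toFinset, List.mem_map_of_involutive (swap_apply_self u v), ← List.mem_toFinset]
    rw [swap_apply_def]
    split_ifs <;> simp_all
  · rw [List.formPerm_map, swap_inv]

theorem mul_swap (h : IsFullCycleOn σ s) {w v : α} (hw : w ∈ s) (hv : v ∉ s) :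
    IsFullCycleOn (σ * swap w v) (insert v s) := by
  have := (h.swap_mul hw hv).swap_conj (Finset.mem_insert_of_mem hw) (Finset.mem_insert_self v s)
  rwa [swap_comm v w, ← mul_assoc, swap_mul_self, one_mul] at this

theorem inv_mul_inv_mul_swap {g f : Perm α} (h : IsFullCycleOn (g⁻¹ * g⁻¹ * f) s)
    (hg : ∀ x ∉ s, g x = x) {u v : α} (hu : u ∈ s) (hv : v ∉ s) :
    IsFullCycleOn ((g * swap u v)⁻¹ * (g * swap u v)⁻¹ * (f * swap u v)) (insert v s) := by
  have hgv : g⁻¹ v = v := Perm.inv_eq_iff_eq.2 (hg v hv).symm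
  have hp : g⁻¹ u ∈ s := by
    by_contra hp
    exact hp ((g.apply_symm_apply u ▸ hg _ hp) ▸ hu)
  have hconj : g⁻¹ * swap u v = swap v (g⁻¹ u) * g⁻¹ := by
    rw [mul_swap_eq_swap_mul, hgv, swap_comm]
  convert (h.swap_mul hp hv).swap_conj (Finset.mem_insert_of_mem hu) (Finset.mem_insert_self v s)
    using 1
  rw [mul_inv_rev, swap_inv, ← mul_assoc (swap u v * g⁻¹), mul_assoc (swap u v) g⁻¹, hconj]
  simp only [mul_assoc]

end IsFullCycleOn

end Equiv.Perm

section fwdCycle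

variable {n : ℕ}

theorem Finset.sort_erase {α : Type*} [LinearOrder α] (s : Finset α) (a : α) :
    (s.erase a).sort (· ≤ ·) = (s.sort (· ≤ ·)).erase a :=
  (s.erase a).sortedLT_sort.eq_of_mem_iff
    (List.sortedLT_iff_pairwise.2 (s.sortedLT_sort.pairwise.sublist (List.erase_sublist)))
    fun x => by simp [(s.sort_nodup _).mem_erase_iff]

theorem fwdCycle_apply_of_notMem {s : Finset (Fin n)} {x : Fin n} (hx : x ∉ s) :
    fwdCycle s x = x :=
  List.formPerm_apply_of_notMem (by simpa using hx)

theorem fwdCycle_eq_one_of_card_le_one {s : Finset (Fin n)} (hs : s.card ≤ 1) : fwdCycle s = 1 :=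
  (List.formPerm_eq_one_iff _ (s.sort_nodup _)).2 (by simpa using hs)

theorem isFullCycleOn_fwdCycle (s : Finset (Fin n)) : (fwdCycle s).IsFullCycleOn s :=
  ⟨_, s.sort_nodup _, s.sort_toFinset _, rfl⟩

theorem fwdCycle_eq_fwdCycle_erase_mul_swap (s : Finset (Fin n)) (v : Fin n) :
    fwdCycle s = fwdCycle (s.erase v) * swap ((fwdCycle s)⁻¹ v) v := by
  rw [fwdCycle, fwdCycle, Finset.sort_erase]
  exact List.formPerm_eq_formPerm_erase_mul_swap (s.sort_nodup _) v

theorem fwdCycle_apply_of_lt {s : Finset (Fin n)} {u v : Fin n} (hu : u ∈ s) (hv : v ∈ s)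
    (huv : u < v) (hgap : ∀ x ∈ s, u < x → v ≤ x) : fwdCycle s u = v := by
  have hl := s.sortedLT_sort
  obtain ⟨i, hi, rfl⟩ := List.getElem_of_mem ((s.mem_sort (· ≤ ·)).2 hu)
  obtain ⟨j, hj, rfl⟩ := List.getElem_of_mem ((s.mem_sort (· ≤ ·)).2 hv)
  have hij : i < j := hl.getElem_lt_getElem_iff.1 huv
  rw [fwdCycle, List.formPerm_apply_lt_getElem _ (s.sort_nodup _) i (by omega)]
  refine le_antisymm (hl.getElem_le_getElem_iff.2 (by omega)) (hgap _ ?_ ?_)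
  · exact (s.mem_sort (· ≤ ·)).1 (List.getElem_mem _)
  · exact hl.getElem_lt_getElem_iff.2 (by omega)

theorem fwdCycle_inv_apply_mem {s : Finset (Fin n)} {v : Fin n} (hv : v ∈ s) :
    (fwdCycle s)⁻¹ v ∈ s := by
  by_contra h
  exact h (((fwdCycle s).apply_symm_apply v ▸ fwdCycle_apply_of_notMem h) ▸ hv)

theorem fwdCycle_inv_apply_mem_erase {s : Finset (Fin n)} {v : Fin n} (hv : v ∈ s)
    (hs : 2 ≤ s.card) : (fwdCycle s)⁻¹ v ∈ s.erase v := by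
  refine Finset.mem_erase.2 ⟨fun hwv => ?_, fwdCycle_inv_apply_mem hv⟩
  exact (List.formPerm_apply_mem_ne_self_iff _ (s.sort_nodup _) v (by simpa)).2 (by simpa)
    (Perm.inv_eq_iff_eq.1 hwv).symm

end fwdCycle

theorem List.prod_map_inv_mul_inv {ι G : Type*} [Group G] (f : ι → G) {l : List ι}
    (hl : l.Pairwise fun i j => Commute (f i) (f j)) :
    (l.map fun i => (f i)⁻¹ * (f i)⁻¹).prod = (l.map f).prod⁻¹ * (l.map f).prod⁻¹ := by
  induction l with
  | nil => simp
  | cons i l ih =>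
    rw [List.pairwise_cons] at hl
    have hi : Commute (f i)⁻¹ (l.map f).prod⁻¹ :=
      (Commute.list_prod_right _ _ fun g hg => by
        obtain ⟨j, hj, rfl⟩ := List.mem_map.1 hg
        exact hl.1 j hj).inv_inv
    rw [List.map_cons, List.prod_cons, ih hl.2, List.map_cons, List.prod_cons, mul_inv_rev,
      hi.mul_mul_mul_comm, hi.eq]

section blocks

variable {n : ℕ}

theorem fwdCycle_commute_of_disjoint {s t : Finset (Fin n)} (h : Disjoint s t) :
    Commute (fwdCycle s) (fwdCycle t) :=
  Perm.Disjoint.commute fun x => by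
    by_cases hx : x ∈ s
    · exact Or.inr (fwdCycle_apply_of_notMem (Finset.disjoint_left.1 h hx))
    · exact Or.inl (fwdCycle_apply_of_notMem hx)

variable {L : List (Finset (Fin n))}

theorem prod_map_fwdCycle_apply_of_forall_notMem {x : Fin n} (hx : ∀ s ∈ L, x ∉ s) :
    (L.map fwdCycle).prod x = x := by
  induction L with
  | nil => rfl
  | cons s L ih =>
    simp only [List.forall_mem_cons] at hx
    rw [List.map_cons, List.prod_cons, Perm.mul_apply, ih hx.2, fwdCycle_apply_of_notMem hx.1]

theorem prod_map_fwdCycle_eq_mul_swap (hd : L.Pairwise Disjoint) {B : Finset (Fin n)}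
    (hB : B ∈ L) {v : Fin n} (hv : v ∈ B) :
    (L.map fwdCycle).prod =
      ((L.map (·.erase v)).map fwdCycle).prod * swap ((fwdCycle B)⁻¹ v) v := by
  induction L with
  | nil => simp at hB
  | cons s L ih =>
    rw [List.pairwise_cons] at hd
    simp only [List.map_cons, List.prod_cons, mul_assoc]
    rcases List.mem_cons.1 hB with rfl | hB
    · have hnotMem : ∀ x ∈ B, ∀ t ∈ L, x ∉ t := fun x hx t ht =>
        Finset.disjoint_left.1 (hd.1 t ht) hx
      have hL : L.map (·.erase v) = L :=
        (List.map_congr_left fun t ht => Finset.erase_eq_of_notMem (hnotMem v hv t ht)).trans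
          (List.map_id L)
      have hfix : ∀ x ∈ B, (L.map fwdCycle).prod⁻¹ x = x := fun x hx =>
        Perm.inv_eq_iff_eq.2 (prod_map_fwdCycle_apply_of_forall_notMem (hnotMem x hx)).symm
      nth_rewrite 1 [fwdCycle_eq_fwdCycle_erase_mul_swap B v]
      rw [mul_assoc, swap_mul_eq_mul_swap, hfix _ (fwdCycle_inv_apply_mem hv), hfix v hv, hL]
    · have hvs : v ∉ s := Finset.disjoint_right.1 (hd.1 B hB) hv
      rw [Finset.erase_eq_of_notMem hvs, ih hd.2 hB]

end blocks

section noncrossing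

variable {n : ℕ}

def blockDiam (B : Finset (Fin n)) : ℕ :=
  B.sup fun z => B.sup fun y => z.val - y.val

theorem sub_le_blockDiam {B : Finset (Fin n)} {a b : Fin n} (ha : a ∈ B) (hb : b ∈ B) :
    b.val - a.val ≤ blockDiam B :=
  (Finset.le_sup (f := fun y : Fin n => b.val - y.val) ha).trans
    (Finset.le_sup (f := fun z : Fin n => B.sup fun y => z.val - y.val) hb)

theorem blockDiam_lt {T : Finset (Fin n)} {a b : Fin n} (hab : a < b)
    (hT : ∀ t ∈ T, a < t ∧ t < b) : blockDiam T < b.val - a.val := by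
  have hab' : 0 < b.val - a.val := Nat.sub_pos_of_lt hab
  refine (Finset.sup_lt_iff hab').2 fun z hz => (Finset.sup_lt_iff hab').2 fun y hy => ?_
  have := (hT z hz).2
  have := (hT y hy).1
  simp only [Fin.lt_def] at *
  omega

variable {L : List (Finset (Fin n))}

theorem NoncrossingList.map_of_subset (h : NoncrossingList L)
    {f : Finset (Fin n) → Finset (Fin n)} (hf : ∀ s, f s ⊆ s) : NoncrossingList (L.map f) := by
  rintro ⟨a, b, c, d, hab, hbc, hcd, _, hs', _, ht', hst, ha, hc, hb, hd⟩
  obtain ⟨s, hs, rfl⟩ := List.mem_map.1 hs'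
  obtain ⟨t, ht, rfl⟩ := List.mem_map.1 ht'
  exact h ⟨a, b, c, d, hab, hbc, hcd, s, hs, t, ht, fun h => hst (h ▸ rfl),
    hf s ha, hf s hc, hf t hb, hf t hd⟩

theorem NoncrossingList.exists_convex_block (h : NoncrossingList L) (hd : L.Pairwise Disjoint)
    {S : Finset (Fin n)} (hcover : ∀ i, i ∈ S ↔ ∃ s ∈ L, i ∈ s) (hS : S.Nonempty) :
    ∃ B ∈ L, B.Nonempty ∧ ∀ y ∈ B, ∀ z ∈ B, ∀ x ∈ S, y ≤ x → x ≤ z → x ∈ B := by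
  obtain ⟨x₀, hx₀⟩ := hS
  obtain ⟨B₀, hB₀, hx₀B₀⟩ := (hcover x₀).1 hx₀
  obtain ⟨B, hB, hmin⟩ := (L.toFinset.filter Finset.Nonempty).exists_min_image blockDiam
    ⟨B₀, by simpa using ⟨hB₀, x₀, hx₀B₀⟩⟩
  simp only [Finset.mem_filter, List.mem_toFinset, and_imp] at hB hmin
  obtain ⟨hBL, hBne⟩ := hB
  refine ⟨B, hBL, hBne, fun y hy z hz x hx hyx hxz => ?_⟩
  by_contra hxB
  obtain ⟨T, hTL, hxT⟩ := (hcover x).1 hx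
  have hTB : T ≠ B := by rintro rfl; exact hxB hxT
  have hdisj : Disjoint T B := hd.forall hTL hBL hTB
  set a := B.min' hBne
  set b := B.max' hBne
  have ha : a ∈ B := B.min'_mem hBne
  have hb : b ∈ B := B.max'_mem hBne
  have hax : a < x := lt_of_le_of_ne ((B.min'_le y hy).trans hyx) (by rintro rfl; exact hxB ha)
  have hxb : x < b := lt_of_le_of_ne (hxz.trans (B.le_max' z hz)) (by rintro rfl; exact hxB hb)
  have hT : ∀ t ∈ T, a < t ∧ t < b := by
    intro t ht
    have htB : t ∉ B := Finset.disjoint_left.1 hdisj ht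
    constructor
    · by_contra! hta
      have hta : t < a := lt_of_le_of_ne hta (by rintro rfl; exact htB ha)
      exact h ⟨t, a, x, b, hta, hax, hxb, T, hTL, B, hBL, hTB, ht, hxT, ha, hb⟩
    · by_contra! hbt
      have hbt : b < t := lt_of_le_of_ne hbt (by rintro rfl; exact htB hb)
      exact h ⟨a, x, b, t, hax, hxb, hbt, B, hBL, T, hTL, hTB.symm, ha, hb, hxT, ht⟩
  have := hmin T hTL ⟨x, hxT⟩
  have := blockDiam_lt (hax.trans hxb) hT
  have := sub_le_blockDiam ha hb
  omega

end noncrossing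

theorem fwdCycle_inv_apply_max'_eq_or {n : ℕ} {B S : Finset (Fin n)} (hB : B.Nonempty)
    (hBS : B ⊆ S) (hconv : ∀ y ∈ B, ∀ z ∈ B, ∀ x ∈ S, y ≤ x → x ≤ z → x ∈ B) :
    (fwdCycle B)⁻¹ (B.max' hB) = B.max' hB ∨
      (fwdCycle B)⁻¹ (B.max' hB) = (fwdCycle S)⁻¹ (B.max' hB) := by
  set v := B.max' hB
  have hv : v ∈ B := B.max'_mem hB
  rcases (B.erase v).eq_empty_or_nonempty with hBv | hBv
  · left
    have : B.card ≤ 1 := by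
      have := Finset.card_erase_of_mem hv
      rw [hBv, Finset.card_empty] at this
      omega
    rw [fwdCycle_eq_one_of_card_le_one this, inv_one, Perm.one_apply]
  · right
    set u := (B.erase v).max' hBv
    have hu : u ∈ B.erase v := (B.erase v).max'_mem hBv
    have huv : u < v := lt_of_le_of_ne (B.le_max' u (Finset.mem_of_mem_erase hu))
      (Finset.ne_of_mem_erase hu)
    have hgap : ∀ x ∈ S, u < x → v ≤ x := by
      intro x hx hux
      by_contra! hxv
      have hxB := hconv u (Finset.mem_of_mem_erase hu) v hv x hx hux.le hxv.le
      exact absurd hux (not_lt.2 ((B.erase v).le_max' x (Finset.mem_erase.2 ⟨hxv.ne, hxB⟩)))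
    rw [Perm.inv_eq_iff_eq.2 (fwdCycle_apply_of_lt (Finset.mem_of_mem_erase hu) hv huv
        fun x hx => hgap x (hBS hx)).symm,
      Perm.inv_eq_iff_eq.2 (fwdCycle_apply_of_lt (hBS (Finset.mem_of_mem_erase hu)) (hBS hv) huv
        hgap).symm]

theorem NoncrossingList.isFullCycleOn_inv_mul_inv_mul_fwdCycle {n : ℕ} (S : Finset (Fin n))
    (L : List (Finset (Fin n))) (hd : L.Pairwise Disjoint)
    (hcover : ∀ i, i ∈ S ↔ ∃ s ∈ L, i ∈ s) (hnc : NoncrossingList L) :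
    ((L.map fwdCycle).prod⁻¹ * (L.map fwdCycle).prod⁻¹ * fwdCycle S).IsFullCycleOn S := by
  induction S using Finset.strongInduction generalizing L with
  | H S ih =>
  rcases le_or_gt S.card 1 with hS | hS
  · have hc : (L.map fwdCycle).prod = 1 := List.prod_eq_one fun g hg => by
      obtain ⟨s, hs, rfl⟩ := List.mem_map.1 hg
      exact fwdCycle_eq_one_of_card_le_one
        ((Finset.card_le_card fun x hx => (hcover x).2 ⟨s, hs, hx⟩).trans hS)
    simpa [hc] using isFullCycleOn_fwdCycle S
  obtain ⟨B, hBL, hBne, hconv⟩ := hnc.exists_convex_block hd hcover (Finset.card_pos.1 (by omega))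
  set v := B.max' hBne
  have hvB : v ∈ B := B.max'_mem hBne
  have hvS : v ∈ S := (hcover v).2 ⟨B, hBL, hvB⟩
  set L' := L.map (·.erase v)
  have hcover' : ∀ i, i ∈ S.erase v ↔ ∃ s ∈ L', i ∈ s := by
    simp [L', hcover, and_left_comm]
  have hσ := ih (S.erase v) (Finset.erase_ssubset hvS) L'
    (hd.map _ fun s t h => h.mono (s.erase_subset v) (t.erase_subset v)) hcover'
    (hnc.map_of_subset fun s => s.erase_subset v)
  suffices ((L.map fwdCycle).prod⁻¹ * (L.map fwdCycle).prod⁻¹ * fwdCycle S).IsFullCycleOn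
      (insert v (S.erase v)) by rwa [Finset.insert_erase hvS] at this
  have hw := fwdCycle_inv_apply_mem_erase hvS hS
  rw [prod_map_fwdCycle_eq_mul_swap hd hBL hvB, fwdCycle_eq_fwdCycle_erase_mul_swap S v]
  rcases fwdCycle_inv_apply_max'_eq_or hBne (fun x hx => (hcover x).2 ⟨B, hBL, hx⟩) hconv
    with hu | hu
  · rw [hu, swap_self, ← Perm.one_def, mul_one, ← mul_assoc]
    exact hσ.mul_swap hw (S.notMem_erase v)
  · rw [hu]
    refine hσ.inv_mul_inv_mul_swap (fun x hx => ?_) hw (S.notMem_erase v)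
    exact prod_map_fwdCycle_apply_of_forall_notMem fun s hs hxs => hx ((hcover' x).2 ⟨s, hs, hxs⟩)

theorem stmt8_general (n k : ℕ) (L : List (Finset (Fin n)))
    (hdisj : L.Pairwise Disjoint)
    (hcover : ∀ i : Fin n, i.val < k ↔ ∃ s ∈ L, i ∈ s)
    (hnc : NoncrossingList L) :
    ∀ i j : Fin n, i.val < k → j.val < k →
      ∃ m : ℕ,
        (((L.map (fun s => (fwdCycle s)⁻¹ * (fwdCycle s)⁻¹)).prod *
          fwdCycle ((Finset.univ : Finset (Fin n)).filter (fun i => i.val < k))) ^ m) i = j := by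
  intro i j hi hj
  rw [List.prod_map_inv_mul_inv fwdCycle (hdisj.imp fwdCycle_commute_of_disjoint)]
  have hcover' : ∀ x, x ∈ Finset.univ.filter (fun i : Fin n => i.val < k) ↔ ∃ s ∈ L, x ∈ s := by
    simpa using hcover
  obtain ⟨m, -, hm⟩ := (hnc.isFullCycleOn_inv_mul_inv_mul_fwdCycle _ L hdisj hcover').isCycleOn
    |>.exists_pow_eq (by simpa using hi) (by simpa using hj)
  exact ⟨m, hm⟩

theorem stmt8 (n k : ℕ) (hk : k ≤ n) (L : List (Finset (Fin n)))
    (hdisj : L.Pairwise Disjoint) (hne : ∀ s ∈ L, s.Nonempty)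
    (hcover : ∀ i : Fin n, i.val < k ↔ ∃ s ∈ L, i ∈ s)
    (hnc : NoncrossingList L) :
    ∀ i j : Fin n, i.val < k → j.val < k →
      ∃ m : ℕ,
        (((L.map (fun s => (fwdCycle s)⁻¹ * (fwdCycle s)⁻¹)).prod *
          fwdCycle ((Finset.univ : Finset (Fin n)).filter (fun i => i.val < k))) ^ m) i = j :=
  stmt8_general n k L hdisj hcover hnc
end

section
/- With notation as above, if (x,y) = (phi_c(a,b), phi_{c^∨}(a,b)) for a crossover c in Cr(mu), then both a and b are midpoints of x and y: d(x,a)+d(a,y)=d(x,y) with |d(x,a)-d(a,y)|<=1, and similarly for b. -/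
/-!
Let `ℓ g` be the dimension of the moved space `M g = range (g - 1)` of `g` acting on `ℚⁿ` by
permuting coordinates. Peeling off one transposition at a time shows that `ℓ` is the transposition
length, and `ℓ` is invariant under inversion and conjugation, so the metric is bi-invariant and
`z ↦ a u z u⁻¹` is an isometry sending `c, c⁻¹P, 1, P` to `x, y, a, b`. It remains to see that `1`
and `P` are midpoints of `c` and `c⁻¹P`, which comes down to `ℓ (c⁻¹ c⁻¹ P) = ℓ P`. Since
`M P ⊆ M c + M (c⁻¹P)` and `ℓ c + ℓ (c⁻¹P) = ℓ P`, the spaces `M c` and `M (c⁻¹P)` are independent;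
then `c * h` and `c⁻¹ * h` (with `h = c⁻¹P`) both have fixed space `Fix c ⊓ Fix h`.
-/

open Equiv

namespace Representation

open Module

variable {k G V : Type*} [Field k] [Group G] [AddCommGroup V] [Module k V]
  (ρ : Representation k G V)

def moved (g : G) : Submodule k V := LinearMap.range (ρ g - 1)

def fixed (g : G) : Submodule k V := LinearMap.ker (ρ g - 1)

variable {ρ}

lemma sub_mem_moved (g : G) (v : V) : ρ g v - v ∈ ρ.moved g := ⟨v, rfl⟩

lemma mem_fixed {g : G} {v : V} : v ∈ ρ.fixed g ↔ ρ g v = v := by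
  simp [fixed, sub_eq_zero]

lemma moved_one : ρ.moved 1 = ⊥ := by
  simp [moved]

lemma moved_inv_le (g : G) : ρ.moved g⁻¹ ≤ ρ.moved g := by
  rintro _ ⟨v, rfl⟩
  have h : (ρ g⁻¹ - 1) v = -(ρ g (ρ g⁻¹ v) - ρ g⁻¹ v) := by simp
  exact h ▸ neg_mem (sub_mem_moved g _)

lemma moved_inv (g : G) : ρ.moved g⁻¹ = ρ.moved g :=
  le_antisymm (moved_inv_le g) (by simpa using moved_inv_le g⁻¹)

lemma fixed_inv (g : G) : ρ.fixed g⁻¹ = ρ.fixed g := by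
  ext v
  rw [mem_fixed, mem_fixed, inv_apply_eq_iff, eq_comm]

lemma moved_mul_le (g h : G) : ρ.moved (g * h) ≤ ρ.moved g ⊔ ρ.moved h := by
  rintro _ ⟨v, rfl⟩
  have e : (ρ (g * h) - 1) v = (ρ g (ρ h v) - ρ h v) + (ρ h v - v) := by simp
  exact e ▸ add_mem (Submodule.mem_sup_left (sub_mem_moved g _))
    (Submodule.mem_sup_right (sub_mem_moved h v))

lemma moved_conj (w g : G) : ρ.moved (w * g * w⁻¹) = (ρ.moved g).map (ρ w) := by
  ext x
  constructor
  · rintro ⟨v, rfl⟩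
    exact ⟨ρ g (ρ w⁻¹ v) - ρ w⁻¹ v, sub_mem_moved g _, by simp⟩
  · rintro ⟨_, ⟨v, rfl⟩, rfl⟩
    exact ⟨ρ w v, by simp⟩

-- If `ρ h v = ρ g v` then `ρ h v - v = ρ g v - v` lies in `moved g ⊓ moved h = ⊥`.
lemma fixed_inv_mul_of_disjoint {g h : G} (hd : Disjoint (ρ.moved g) (ρ.moved h)) :
    ρ.fixed (g⁻¹ * h) = ρ.fixed g ⊓ ρ.fixed h := by
  ext v
  simp only [Submodule.mem_inf, mem_fixed]
  constructor
  · intro hv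
    have hgh : ρ h v = ρ g v := by simpa using congrArg (ρ g) hv
    have hzero : ρ h v - v = 0 := (Submodule.disjoint_def.mp hd) _
      (hgh ▸ sub_mem_moved g v) (sub_mem_moved h v)
    have hh : ρ h v = v := sub_eq_zero.mp hzero
    exact ⟨hgh ▸ hh, hh⟩
  · rintro ⟨hg, hh⟩
    simpa [hh, inv_apply_eq_iff] using hg.symm

lemma fixed_mul_of_disjoint {g h : G} (hd : Disjoint (ρ.moved g) (ρ.moved h)) :
    ρ.fixed (g * h) = ρ.fixed g ⊓ ρ.fixed h := by
  have := fixed_inv_mul_of_disjoint (ρ := ρ) (g := g⁻¹) (h := h) (by rwa [moved_inv])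
  rwa [inv_inv, fixed_inv] at this

lemma finrank_moved_conj (w g : G) :
    finrank k (ρ.moved (w * g * w⁻¹)) = finrank k (ρ.moved g) := by
  rw [moved_conj]
  exact (Submodule.equivMapOfInjective _ (ρ.apply_bijective w).1 _).finrank_eq.symm

variable [FiniteDimensional k V]

lemma finrank_moved_add_finrank_fixed (g : G) :
    finrank k (ρ.moved g) + finrank k (ρ.fixed g) = finrank k V :=
  LinearMap.finrank_range_add_finrank_ker _

lemma finrank_moved_mul_le (g h : G) :
    finrank k (ρ.moved (g * h)) ≤ finrank k (ρ.moved g) + finrank k (ρ.moved h) :=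
  (Submodule.finrank_mono (moved_mul_le g h)).trans
    (Submodule.finrank_add_le_finrank_add_finrank _ _)

lemma disjoint_moved_of_finrank_moved_mul {g h : G}
    (hgh : finrank k (ρ.moved (g * h)) = finrank k (ρ.moved g) + finrank k (ρ.moved h)) :
    Disjoint (ρ.moved g) (ρ.moved h) := by
  have hsup := Submodule.finrank_sup_add_finrank_inf_eq (ρ.moved g) (ρ.moved h)
  have hle := Submodule.finrank_mono (moved_mul_le (ρ := ρ) g h)
  rw [disjoint_iff, ← Submodule.finrank_eq_zero]
  omega

lemma finrank_moved_inv_mul_of_finrank_moved_mul {g h : G}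
    (hgh : finrank k (ρ.moved (g * h)) = finrank k (ρ.moved g) + finrank k (ρ.moved h)) :
    finrank k (ρ.moved (g⁻¹ * h)) = finrank k (ρ.moved (g * h)) := by
  have hd := disjoint_moved_of_finrank_moved_mul hgh
  have h₁ := finrank_moved_add_finrank_fixed (ρ := ρ) (g⁻¹ * h)
  have h₂ := finrank_moved_add_finrank_fixed (ρ := ρ) (g * h)
  rw [fixed_inv_mul_of_disjoint hd] at h₁
  rw [fixed_mul_of_disjoint hd] at h₂
  omega

end Representation

open Module Representation

section PermRep

variable (k α : Type*) [Field k]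

def permRep : Representation k (Perm α) (α → k) where
  toFun g := LinearMap.funLeft k k ⇑g⁻¹
  map_one' := rfl
  map_mul' _ _ := rfl

variable {k α}

@[simp] lemma permRep_apply (g : Perm α) (f : α → k) (i : α) :
    permRep k α g f i = f (g⁻¹ i) := rfl

lemma mem_fixed_permRep {g : Perm α} {f : α → k} :
    f ∈ (permRep k α).fixed g ↔ ∀ i, f (g i) = f i := by
  rw [mem_fixed, funext_iff]
  constructor
  · intro h i
    simpa using (h (g i)).symm
  · intro h i
    simpa using (h (g⁻¹ i)).symm

section

variable [DecidableEq α]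

lemma permRep_single (g : Perm α) (a : α) (r : k) :
    permRep k α g (Pi.single a r) = Pi.single (g a) r := by
  funext i
  simp only [permRep_apply, Pi.single_apply, Perm.inv_eq_iff_eq]

lemma single_mem_fixed_permRep_iff {g : Perm α} {a : α} :
    Pi.single a (1 : k) ∈ (permRep k α).fixed g ↔ g a = a := by
  rw [mem_fixed, permRep_single]
  constructor
  · intro h
    simpa [Pi.single_apply, eq_comm] using congrFun h a
  · intro h
    rw [h]

lemma finrank_moved_swap_le (i j : α) :
    finrank k ((permRep k α).moved (swap i j)) ≤ 1 := by
  have hle : (permRep k α).moved (swap i j) ≤ Submodule.span k {Pi.single i 1 - Pi.single j 1} := by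
    rintro _ ⟨f, rfl⟩
    refine Submodule.mem_span_singleton.mpr ⟨f j - f i, funext fun m => ?_⟩
    rcases eq_or_ne i j with rfl | hij
    · simp
    simp only [Pi.smul_apply, Pi.sub_apply, Pi.single_apply, smul_eq_mul, LinearMap.sub_apply,
      permRep_apply, swap_inv, Module.End.one_apply, swap_apply_def]
    split_ifs <;> subst_vars <;> simp_all
  exact (Submodule.finrank_mono hle).trans (finrank_span_le_card _) |>.trans (by simp)

variable [Fintype α]

lemma finrank_moved_prod_le {l : List (Perm α)} (hl : ∀ t ∈ l, t.IsSwap) :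
    finrank k ((permRep k α).moved l.prod) ≤ l.length := by
  induction l with
  | nil => rw [List.prod_nil, moved_one, finrank_bot]; exact Nat.zero_le _
  | cons t l ih =>
    obtain ⟨i, j, -, rfl⟩ := hl t List.mem_cons_self
    calc finrank k ((permRep k α).moved (swap i j * l.prod))
        ≤ finrank k ((permRep k α).moved (swap i j)) + finrank k ((permRep k α).moved l.prod) :=
          finrank_moved_mul_le _ _
      _ ≤ 1 + l.length :=
          add_le_add (finrank_moved_swap_le i j) (ih fun s hs => hl s (List.mem_cons_of_mem _ hs))
      _ = (swap i j :: l).length := by simp [add_comm]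

-- Functions constant on the cycles of `g` stay fixed, and `Pi.single a 1` becomes fixed.
lemma finrank_moved_swap_mul_lt {g : Perm α} {a : α} (ha : g a ≠ a) :
    finrank k ((permRep k α).moved (swap a (g a) * g)) < finrank k ((permRep k α).moved g) := by
  have hle : (permRep k α).fixed g ≤ (permRep k α).fixed (swap a (g a) * g) := by
    intro f hf
    rw [mem_fixed_permRep] at hf ⊢
    have hswap : ∀ j, f (swap a (g a) j) = f j := by
      intro j
      rw [swap_apply_def]
      split_ifs with h₁ h₂
      · rw [h₁, hf]
      · rw [h₂, hf]
      · rfl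
    intro i
    rw [Perm.mul_apply, hswap, hf]
  have hlt : (permRep k α).fixed g < (permRep k α).fixed (swap a (g a) * g) := by
    refine lt_of_le_of_ne hle fun h => ha ?_
    rw [← single_mem_fixed_permRep_iff (k := k), h, single_mem_fixed_permRep_iff]
    simp
  have h₁ := finrank_moved_add_finrank_fixed (ρ := permRep k α) g
  have h₂ := finrank_moved_add_finrank_fixed (ρ := permRep k α) (swap a (g a) * g)
  have := Submodule.finrank_lt_finrank_of_lt hlt
  omega

lemma exists_swap_factorization (g : Perm α) :
    ∃ l : List (Perm α), l.length ≤ finrank k ((permRep k α).moved g) ∧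
      (∀ t ∈ l, t.IsSwap) ∧ l.prod = g := by
  induction hm : finrank k ((permRep k α).moved g) using Nat.strong_induction_on generalizing g
    with
  | _ m ih =>
  by_cases hg : g = 1
  · subst hg
    exact ⟨[], Nat.zero_le _, by simp, rfl⟩
  obtain ⟨a, ha⟩ : ∃ a, g a ≠ a := by
    by_contra! h
    exact hg (Equiv.ext h)
  have hlt := finrank_moved_swap_mul_lt (k := k) ha
  obtain ⟨l, hlen, hl, hprod⟩ := ih _ (hm ▸ hlt) _ rfl
  refine ⟨swap a (g a) :: l, by simp only [List.length_cons]; omega, ?_, ?_⟩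
  · intro t ht
    rcases List.mem_cons.mp ht with rfl | ht
    exacts [⟨a, g a, ha.symm, rfl⟩, hl t ht]
  · rw [List.prod_cons, hprod, swap_mul_self_mul]

lemma isLeast_finrank_moved (g : Perm α) :
    IsLeast {m | ∃ l : List (Perm α), l.length = m ∧ (∀ t ∈ l, t.IsSwap) ∧ l.prod = g}
      (finrank k ((permRep k α).moved g)) := by
  refine ⟨?_, fun _ ⟨l, hlen, hl, hprod⟩ => hlen ▸ hprod ▸ finrank_moved_prod_le hl⟩
  obtain ⟨l, hlen, hl, rfl⟩ := exists_swap_factorization (k := k) g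
  exact ⟨l, le_antisymm hlen (finrank_moved_prod_le hl), hl, rfl⟩

end

end PermRep

lemma trdist_eq_finrank_moved {n : ℕ} (a b : Perm (Fin n)) :
    trdist a b = finrank ℚ ((permRep ℚ (Fin n)).moved (a⁻¹ * b)) :=
  (isLeast_finrank_moved _).csInf_eq

section Trdist

variable {n : ℕ}

lemma trdist_comm (a b : Perm (Fin n)) : trdist a b = trdist b a := by
  rw [trdist_eq_finrank_moved, trdist_eq_finrank_moved, ← moved_inv, mul_inv_rev, inv_inv]

lemma trdist_mul_left (g a b : Perm (Fin n)) : trdist (g * a) (g * b) = trdist a b := by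
  rw [trdist_eq_finrank_moved, trdist_eq_finrank_moved, mul_inv_rev, mul_assoc,
    inv_mul_cancel_left]

lemma trdist_mul_right (a b h : Perm (Fin n)) : trdist (a * h) (b * h) = trdist a b := by
  have e : (a * h)⁻¹ * (b * h) = h⁻¹ * (a⁻¹ * b) * h⁻¹⁻¹ := by group
  rw [trdist_eq_finrank_moved, trdist_eq_finrank_moved, e, finrank_moved_conj]

lemma trdist_one_left (g : Perm (Fin n)) :
    trdist 1 g = finrank ℚ ((permRep ℚ (Fin n)).moved g) := by
  rw [trdist_eq_finrank_moved, inv_one, one_mul]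

lemma trdist_inv_mul_of_trdist_add {c p : Perm (Fin n)}
    (h : trdist 1 c + trdist c p = trdist 1 p) : trdist c (c⁻¹ * p) = trdist 1 p := by
  rw [trdist_one_left, trdist_one_left, trdist_eq_finrank_moved] at h
  rw [trdist_eq_finrank_moved, trdist_one_left]
  have key := finrank_moved_inv_mul_of_finrank_moved_mul (g := c) (h := c⁻¹ * p)
    (by rw [mul_inv_cancel_left]; exact h.symm)
  rwa [mul_inv_cancel_left] at key

lemma mul_mul_mem_midpts {m a b : Perm (Fin n)} (g h : Perm (Fin n)) (hm : m ∈ midpts a b) :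
    g * m * h ∈ midpts (g * a * h) (g * b * h) := by
  simpa only [midpts, Set.mem_ofPred_eq, trdist_mul_right, trdist_mul_left] using hm

lemma one_mem_midpts_inv_mul {c p : Perm (Fin n)} (hc : c ∈ midpts 1 p) :
    1 ∈ midpts c (c⁻¹ * p) := by
  obtain ⟨hsum, habs⟩ := hc
  have hcp : trdist 1 (c⁻¹ * p) = trdist c p := by
    rw [← trdist_mul_left c, mul_one, mul_inv_cancel_left]
  refine ⟨?_, ?_⟩
  · rw [trdist_comm c 1, hcp, trdist_inv_mul_of_trdist_add hsum, hsum]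
  · rwa [trdist_comm c 1, hcp]

lemma right_mem_midpts_inv_mul {c p : Perm (Fin n)} (hc : c ∈ midpts 1 p) :
    p ∈ midpts c (c⁻¹ * p) := by
  obtain ⟨hsum, habs⟩ := hc
  have hpc : trdist p (c⁻¹ * p) = trdist 1 c := by
    calc trdist p (c⁻¹ * p) = trdist (1 * p) (c⁻¹ * p) := by rw [one_mul]
      _ = trdist (c * 1) (c * c⁻¹) := by rw [trdist_mul_right, trdist_mul_left]
      _ = trdist 1 c := by rw [mul_one, mul_inv_cancel, trdist_comm]
  refine ⟨?_, ?_⟩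
  · rw [hpc, trdist_inv_mul_of_trdist_add hsum, ← hsum, add_comm]
  · rwa [hpc, abs_sub_comm]

end Trdist

theorem stmt13_general (n : ℕ) (a b u c P x y : Equiv.Perm (Fin n))
    (hu : IsConjugator P (a⁻¹ * b) u) (hc : c ∈ midpts 1 P)
    (hx : x = a * u * c * u⁻¹) (hy : y = a * u * (c⁻¹ * P) * u⁻¹) :
    a ∈ midpts x y ∧ b ∈ midpts x y := by
  have hb : b = a * u * P * u⁻¹ := by
    rw [mul_assoc a, mul_assoc a, hu.1, mul_inv_cancel_left]
  subst hx hy hb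
  refine ⟨?_, mul_mul_mem_midpts (a * u) u⁻¹ (right_mem_midpts_inv_mul hc)⟩
  simpa using mul_mul_mem_midpts (a * u) u⁻¹ (one_mem_midpts_inv_mul hc)

theorem stmt13 (n : ℕ) (a b u c P x y : Equiv.Perm (Fin n))
    (hP : P = canonPerm n (orderedCycleType (a⁻¹ * b)) 0)
    (hu : IsConjugator P (a⁻¹ * b) u) (hc : c ∈ midpts 1 P)
    (hx : x = a * u * c * u⁻¹) (hy : y = a * u * (c⁻¹ * P) * u⁻¹) :
    a ∈ midpts x y ∧ b ∈ midpts x y :=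
  stmt13_general n a b u c P x y hu hc hx hy
end

section
/- With notation as above, if (x,y) = Phi_c(a,b) = (phi_c(a,b), phi_{c^∨}(a,b)), then u_{x^{-1}y} = u_{a^{-1}b} · u_{c^{-1}c^∨}, where u_{c^{-1}c^∨} is the unique permutation conjugating p_mu to c^{-1}c^∨ and matching cycle minima. -/
open Equiv

/-! Concatenating minimal transposition factorizations of the midpoint `c` and of `c⁻¹ * P`
gives a factorization of `P` into `trdist 1 P ≤ n - #cycles P` transpositions (the bound comes
from the explicit factorization of the canonical permutation). The components of the graph
formed by these transpositions contain the cycles of `P`, and there are at least `n` minus the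
number of edges of them, so they are exactly the cycles of `P`. Hence `c`, `c⁻¹ * P` and
`q = c⁻¹ * (c⁻¹ * P)` map every cycle of `P` into itself; as `q` is conjugate to `P`, it has
the same cycles, hence the same cycle minima, so `u'` fixes the minima of `P`. Then `u * u'`
conjugates `P` to `u * q * u⁻¹ = x⁻¹ * y` and matches minima, and such a conjugator is
unique. -/

open Finset Equiv.Perm

section ClassMins

variable {n : ℕ} {R R' : Fin n → Fin n → Prop}

noncomputable def classMins (R : Fin n → Fin n → Prop) : Finset (Fin n) :=
  @Finset.filter _ (fun i => ∀ j, R i j → i ≤ j) (Classical.decPred _) Finset.univ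

theorem mem_classMins {m : Fin n} : m ∈ classMins R ↔ ∀ j, R m j → m ≤ j := by
  simp [classMins]

theorem mem_cycleMins {p : Perm (Fin n)} {m : Fin n} :
    m ∈ cycleMins p ↔ m ∈ classMins p.SameCycle :=
  Finset.mem_sort _

theorem length_cycleMins (p : Perm (Fin n)) : (cycleMins p).length = #(classMins p.SameCycle) :=
  Finset.length_sort _

theorem cycleMins_congr {p q : Perm (Fin n)} (h : ∀ i j, p.SameCycle i j ↔ q.SameCycle i j) :
    cycleMins p = cycleMins q := by
  have : p.SameCycle = q.SameCycle := funext₂ fun i j => propext (h i j)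
  unfold cycleMins
  rw [this]

theorem classMins_anti (h : ∀ i j, R i j → R' i j) : classMins R' ⊆ classMins R := fun i hi =>
  mem_classMins.mpr fun j hj => mem_classMins.mp hi j (h i j hj)

theorem Equivalence.exists_mem_classMins (hR : Equivalence R) (i : Fin n) :
    ∃ m ∈ classMins R, R m i := by
  classical
  have hne : (univ.filter (R i)).Nonempty := ⟨i, by simpa using hR.refl i⟩
  have him : R i ((univ.filter (R i)).min' hne) := by
    simpa using (univ.filter (R i)).min'_mem hne
  refine ⟨_, mem_classMins.mpr fun j hj => ?_, hR.symm him⟩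
  exact (univ.filter (R i)).min'_le j (by simpa using hR.trans him hj)

theorem Equivalence.eq_of_mem_classMins (hR : Equivalence R) {i m : Fin n}
    (hi : i ∈ classMins R) (hm : m ∈ classMins R) (h : R i m) : i = m :=
  le_antisymm (mem_classMins.mp hi m h) (mem_classMins.mp hm i (hR.symm h))

theorem Equivalence.le_of_card_classMins_le (hR : Equivalence R) (hR' : Equivalence R')
    (hle : ∀ i j, R i j → R' i j) (hcard : #(classMins R) ≤ #(classMins R')) {i j : Fin n}
    (h : R' i j) : R i j := by
  have heq : classMins R' = classMins R :=
    eq_of_subset_of_card_le (classMins_anti hle) hcard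
  obtain ⟨mi, hmi, hmii⟩ := hR.exists_mem_classMins i
  obtain ⟨mj, hmj, hmjj⟩ := hR.exists_mem_classMins j
  have hR'm : R' mi mj := hR'.trans (hR'.trans (hle _ _ hmii) h) (hR'.symm (hle _ _ hmjj))
  rw [← heq] at hmi hmj
  obtain rfl := hR'.eq_of_mem_classMins hmi hmj hR'm
  exact hR.trans (hR.symm hmii) hmjj

theorem Equivalence.sum_card_classes_eq [DecidableRel R] (hR : Equivalence R) :
    ∑ m ∈ classMins R, #(univ.filter (R m)) = n := by
  choose f hf hfR using hR.exists_mem_classMins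
  have hfiber : ∀ m ∈ classMins R, univ.filter (fun i => f i = m) = univ.filter (R m) := by
    intro m hm
    ext i
    simp only [mem_filter, mem_univ, true_and]
    refine ⟨fun h => h ▸ hfR i, fun h => ?_⟩
    exact hR.eq_of_mem_classMins (hf i) hm (hR.trans (hfR i) (hR.symm h))
  rw [← Finset.sum_congr rfl fun m hm => congrArg card (hfiber m hm),
    ← card_eq_sum_card_fiberwise fun i _ => hf i, card_univ, Fintype.card_fin]

end ClassMins

section CycleStabilizer

variable {α : Type*}

theorem Equiv.Perm.SameCycle.of_forall_apply [Finite α] {g : Perm α} {R : α → α → Prop}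
    (hrefl : ∀ i, R i i) (htrans : ∀ {i j k}, R i j → R j k → R i k) (hstep : ∀ i, R i (g i))
    {i j : α} (h : g.SameCycle i j) : R i j := by
  obtain ⟨k, rfl⟩ := h.exists_nat_pow_eq
  clear h
  induction k generalizing i with
  | zero => exact hrefl i
  | succ k ih => simpa only [pow_succ, Perm.mul_apply] using htrans (hstep i) (ih (i := g i))

def cycleStabilizer (b : Perm α) : Subgroup (Perm α) where
  carrier := {g | ∀ i, b.SameCycle i (g i)}
  one_mem' i := SameCycle.refl _ _
  mul_mem' hg hh i := (hh i).trans (hg _)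
  inv_mem' {g} hg i := by simpa using (hg (g⁻¹ i)).symm

theorem self_mem_cycleStabilizer (b : Perm α) : b ∈ cycleStabilizer b :=
  fun _ => ⟨1, rfl⟩

theorem Equiv.Perm.SameCycle.of_mem_cycleStabilizer [Finite α] {b g : Perm α}
    (hg : g ∈ cycleStabilizer b) {i j : α} (h : g.SameCycle i j) : b.SameCycle i j :=
  h.of_forall_apply (SameCycle.refl _) SameCycle.trans hg

end CycleStabilizer

section SwapRel

variable {α : Type*} {l : List (Perm α)}

def swapRel (l : List (Perm α)) : α → α → Prop :=
  Relation.ReflTransGen fun i j => ∃ t ∈ l, t i = j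

theorem swapRel_equivalence [DecidableEq α] (hl : ∀ t ∈ l, t.IsSwap) :
    Equivalence (swapRel l) := by
  refine ⟨fun _ => .refl, fun h => ?_, .trans⟩
  refine Relation.reflTransGen_swap.mp (Relation.ReflTransGen.mono ?_ _ _ h)
  rintro i _ ⟨t, ht, rfl⟩
  obtain ⟨x, y, -, rfl⟩ := hl t ht
  exact ⟨swap x y, ht, swap_apply_self _ _ _⟩

theorem swapRel_mono {l' : List (Perm α)} (hsub : l ⊆ l') {i j : α} (h : swapRel l i j) :
    swapRel l' i j :=
  Relation.ReflTransGen.mono (fun _ _ ⟨t, ht, hti⟩ => ⟨t, hsub ht, hti⟩) _ _ h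

theorem swapRel_prod_apply (l : List (Perm α)) (i : α) : swapRel l i (l.prod i) := by
  induction l generalizing i with
  | nil => exact .refl
  | cons t l ih =>
    exact (swapRel_mono (List.subset_cons_self t l) (ih i)).tail ⟨t, List.mem_cons_self, rfl⟩

theorem swapRel_swap_cons [DecidableEq α] (hl : ∀ t ∈ l, t.IsSwap) {x y i j : α}
    (h : swapRel (swap x y :: l) i j) :
    swapRel l i j ∨ ((swapRel l i x ∨ swapRel l i y) ∧ (swapRel l j x ∨ swapRel l j y)) := by
  have hsymm : ∀ {a b}, swapRel l a b → swapRel l b a := (swapRel_equivalence hl).symm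
  induction h with
  | refl => exact .inl .refl
  | @tail k _ _ hstep ih =>
    obtain ⟨t, ht, rfl⟩ := hstep
    rcases List.mem_cons.mp ht with rfl | ht
    · rcases eq_or_ne k x with rfl | hkx
      · rw [swap_apply_left]
        exact .inr ⟨ih.elim .inl And.left, .inr .refl⟩
      rcases eq_or_ne k y with rfl | hky
      · rw [swap_apply_right]
        exact .inr ⟨ih.elim .inr And.left, .inl .refl⟩
      rwa [swap_apply_of_ne_of_ne hkx hky]
    · have hkt : swapRel l k (t k) := .single ⟨t, ht, rfl⟩
      refine ih.imp (fun h => h.trans hkt) fun ⟨hi, hk⟩ => ⟨hi, ?_⟩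
      exact hk.imp (hsymm hkt).trans (hsymm hkt).trans

theorem exists_isSwap_prod_eq_formPerm [DecidableEq α] (L : List α) (hL : L.Nodup) :
    ∃ l : List (Perm α), (∀ t ∈ l, t.IsSwap) ∧ l.prod = L.formPerm ∧
      l.length = L.length - 1 := by
  induction L with
  | nil => exact ⟨[], by simp, by simp, rfl⟩
  | cons x L ih =>
    match L, hL, ih with
    | [], _, _ => exact ⟨[], by simp, by simp, rfl⟩
    | y :: L, hL, ih =>
      obtain ⟨l, hl, hprod, hlen⟩ := ih hL.of_cons
      have hxy : x ≠ y := fun h => (List.nodup_cons.mp hL).1 (h ▸ List.mem_cons_self)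
      refine ⟨swap x y :: l, ?_, by rw [List.prod_cons, hprod, List.formPerm_cons_cons], ?_⟩
      · exact List.forall_mem_cons.mpr ⟨⟨x, y, hxy, rfl⟩, hl⟩
      · simp [hlen]

end SwapRel

section Counting

variable {n : ℕ} {l : List (Perm (Fin n))}

/-- Adding one transposition merges at most two classes: only the larger of their two minima can
stop being a minimum. -/
theorem exists_classMins_swapRel_sdiff_swap_cons_subset (hl : ∀ t ∈ l, t.IsSwap) (x y : Fin n) :
    ∃ m, classMins (swapRel l) \ classMins (swapRel (swap x y :: l)) ⊆ {m} := by
  have hR := swapRel_equivalence hl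
  obtain ⟨mx, hmx, hmxx⟩ := hR.exists_mem_classMins x
  obtain ⟨my, hmy, hmyy⟩ := hR.exists_mem_classMins y
  refine ⟨max mx my, fun i hi => ?_⟩
  obtain ⟨hil, hil'⟩ := mem_sdiff.mp hi
  obtain ⟨j, hij, hji⟩ : ∃ j, swapRel (swap x y :: l) i j ∧ j < i := by
    simpa [mem_classMins] using hil'
  have hmin (m z : Fin n) (hm : m ∈ classMins (swapRel l)) (hmz : swapRel l m z)
      (hz : swapRel l j z) : m ≤ j := mem_classMins.mp hm j (hmz.trans (hR.symm hz))
  rw [mem_singleton]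
  rcases swapRel_swap_cons hl hij with hij | ⟨hix | hiy, hjx | hjy⟩
  · exact absurd (mem_classMins.mp hil j hij) (not_le.mpr hji)
  · exact absurd (hmin i x hil hix hjx) (not_le.mpr hji)
  · obtain rfl := hR.eq_of_mem_classMins hil hmx (hix.trans (hR.symm hmxx))
    exact (max_eq_left (hmin my y hmy hmyy hjy |>.trans hji.le)).symm
  · obtain rfl := hR.eq_of_mem_classMins hil hmy (hiy.trans (hR.symm hmyy))
    exact (max_eq_right (hmin mx x hmx hmxx hjx |>.trans hji.le)).symm
  · exact absurd (hmin i y hil hiy hjy) (not_le.mpr hji)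

theorem le_card_classMins_swapRel_add_length (hl : ∀ t ∈ l, t.IsSwap) :
    n ≤ #(classMins (swapRel l)) + l.length := by
  induction l with
  | nil =>
    have : classMins (swapRel ([] : List (Perm (Fin n)))) = univ := by
      refine eq_univ_of_forall fun i => mem_classMins.mpr fun j hj => ?_
      rw [swapRel, Relation.reflTransGen_iff_eq (by simp)] at hj
      exact hj.ge
    simp [this]
  | cons t l ih =>
    have hl' : ∀ s ∈ l, s.IsSwap := fun s hs => hl s (List.mem_cons_of_mem _ hs)
    obtain ⟨x, y, -, rfl⟩ := hl t List.mem_cons_self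
    obtain ⟨m, hm⟩ := exists_classMins_swapRel_sdiff_swap_cons_subset hl' x y
    have hsub : classMins (swapRel (swap x y :: l)) ⊆ classMins (swapRel l) :=
      classMins_anti fun _ _ => swapRel_mono (List.subset_cons_self _ _)
    have hsplit := card_sdiff_add_card_eq_card hsub
    have hlost := (card_le_card hm).trans_eq (card_singleton m)
    have := ih hl'
    rw [List.length_cons]
    omega

end Counting

section Canonical

variable {n : ℕ}

theorem trdist_le_length {a b : Perm (Fin n)} {l : List (Perm (Fin n))}
    (hl : ∀ t ∈ l, t.IsSwap) (hprod : l.prod = a⁻¹ * b) : trdist a b ≤ l.length :=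
  Nat.sInf_le ⟨l, rfl, hl, hprod⟩

theorem exists_length_eq_trdist (a b : Perm (Fin n)) :
    ∃ l : List (Perm (Fin n)), l.length = trdist a b ∧ (∀ t ∈ l, t.IsSwap) ∧
      l.prod = a⁻¹ * b := by
  obtain ⟨l, hprod, hl⟩ := (truncSwapFactors (a⁻¹ * b)).out
  exact Nat.sInf_mem (s := {k | ∃ l : List (Perm (Fin n)), l.length = k ∧ (∀ t ∈ l, t.IsSwap) ∧
    l.prod = a⁻¹ * b}) ⟨l.length, l, rfl, hl, hprod⟩

theorem card_filter_mem_Ico_le (off m : ℕ) :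
    #(univ.filter fun i : Fin n => off ≤ i.val ∧ i.val < off + m) ≤ m := by
  calc #(univ.filter fun i : Fin n => off ≤ i.val ∧ i.val < off + m)
      ≤ #(Ico off (off + m)) :=
        card_le_card_of_injOn Fin.val (fun i hi => by simpa using hi) Fin.val_injective.injOn
    _ = m := by simp

theorem exists_isSwap_prod_eq_canonPerm (μ : List ℕ) (hμ : ∀ m ∈ μ, 1 ≤ m) (off : ℕ) :
    ∃ l : List (Perm (Fin n)), (∀ t ∈ l, t.IsSwap) ∧ l.prod = canonPerm n μ off ∧
      l.length + μ.length ≤ μ.sum := by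
  induction μ generalizing off with
  | nil => exact ⟨[], by simp, rfl, by simp⟩
  | cons m μ ih =>
    obtain ⟨hm, hμ⟩ := List.forall_mem_cons.mp hμ
    obtain ⟨lμ, hlμ, hprodμ, hlenμ⟩ := ih hμ (off + m)
    set s := univ.filter fun i : Fin n => off ≤ i.val ∧ i.val < off + m
    obtain ⟨ls, hls, hprods, hlens⟩ :=
      exists_isSwap_prod_eq_formPerm (s.sort (· ≤ ·)) (s.sort_nodup _)
    refine ⟨ls ++ lμ, List.forall_mem_append.mpr ⟨hls, hlμ⟩, ?_, ?_⟩
    · rw [List.prod_append, hprods, hprodμ]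
      rfl
    · have hs : #s ≤ m := card_filter_mem_Ico_le off m
      rw [length_sort] at hlens
      simp only [List.length_append, List.length_cons, List.sum_cons]
      omega

theorem trdist_one_canonPerm_add_length_le (μ : List ℕ) (hμ : ∀ m ∈ μ, 1 ≤ m) (off : ℕ) :
    trdist 1 (canonPerm n μ off) + μ.length ≤ μ.sum := by
  obtain ⟨l, hl, hprod, hlen⟩ := exists_isSwap_prod_eq_canonPerm (n := n) μ hμ off
  have := trdist_le_length (a := 1) hl (by rw [hprod, inv_one, one_mul])
  omega

theorem sum_orderedCycleType (p : Perm (Fin n)) : (orderedCycleType p).sum = n := by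
  refine Eq.trans ?_ (SameCycle.equivalence p).sum_card_classes_eq
  rw [orderedCycleType, cycleMins, ((sort_perm_toList _ _).map _).sum_eq, sum_map_toList]
  exact sum_congr rfl fun m _ => by congr

theorem one_le_of_mem_orderedCycleType {p : Perm (Fin n)} {m : ℕ}
    (hm : m ∈ orderedCycleType p) : 1 ≤ m := by
  obtain ⟨i, -, rfl⟩ := List.mem_map.mp hm
  exact card_pos.mpr ⟨i, by simpa using SameCycle.refl p i⟩

end Canonical

section Conjugators

variable {n : ℕ} {p q r u v : Perm (Fin n)}

theorem IsConjugator.trans (hu : IsConjugator p q u) (hv : IsConjugator q r v) :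
    IsConjugator p r (v * u) := by
  refine ⟨?_, ?_⟩
  · rw [← hv.1, ← hu.1]
    group
  · rw [coe_mul, ← List.map_map, hu.2, hv.2]

/-- A conjugator is determined by its values on the cycle minima, since it intertwines the two
permutations. -/
theorem IsConjugator.unique (hu : IsConjugator p q u) (hv : IsConjugator p q v) : u = v := by
  have hmins : ∀ m ∈ cycleMins p, u m = v m := List.map_inj_left.mp (hu.2.trans hv.2.symm)
  have hcomm : ∀ w : Perm (Fin n), IsConjugator p q w → ∀ k : ℕ, w * p ^ k = q ^ k * w := by
    intro w hw k
    rw [← hw.1, conj_pow]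
    group
  ext i
  obtain ⟨m, hm, hmi⟩ := (SameCycle.equivalence p).exists_mem_classMins i
  obtain ⟨k, rfl⟩ := hmi.exists_nat_pow_eq
  have hu' := congrArg (· m) (hcomm u hu k)
  have hv' := congrArg (· m) (hcomm v hv k)
  simp only [Perm.mul_apply] at hu' hv'
  rw [hu', hv', hmins m (mem_cycleMins.mpr hm)]

theorem IsConjugator.of_sameCycle_iff (hu : IsConjugator p r u)
    (h : ∀ i j, p.SameCycle i j ↔ q.SameCycle i j) : IsConjugator q (u * q * u⁻¹) u := by
  refine ⟨rfl, ?_⟩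
  rw [← cycleMins_congr h, hu.2, ← hu.1]
  exact cycleMins_congr fun i j => by rw [sameCycle_conj, sameCycle_conj, h]

end Conjugators

section Geodesics

variable {n : ℕ} {b : Perm (Fin n)}

theorem mem_cycleStabilizer_of_mem_of_length_add_le {l : List (Perm (Fin n))}
    (hl : ∀ t ∈ l, t.IsSwap) (hprod : l.prod = b) (hlen : l.length + (cycleMins b).length ≤ n)
    {t : Perm (Fin n)} (ht : t ∈ l) : t ∈ cycleStabilizer b := by
  have hR := swapRel_equivalence hl
  have hb : ∀ i j, b.SameCycle i j → swapRel l i j := fun _ _ h =>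
    h.of_forall_apply hR.refl hR.trans fun i => hprod ▸ swapRel_prod_apply l i
  have hcard : #(classMins b.SameCycle) ≤ #(classMins (swapRel l)) := by
    have := le_card_classMins_swapRel_add_length hl
    rw [length_cycleMins] at hlen
    omega
  exact fun i =>
    (SameCycle.equivalence b).le_of_card_classMins_le hR hb hcard (.single ⟨t, ht, rfl⟩)

theorem mem_cycleStabilizer_of_trdist_add_eq {c : Perm (Fin n)}
    (hc : trdist 1 c + trdist c b = trdist 1 b) (hb : trdist 1 b + (cycleMins b).length ≤ n) :
    c ∈ cycleStabilizer b := by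
  obtain ⟨l₁, hlen₁, hl₁, hprod₁⟩ := exists_length_eq_trdist 1 c
  obtain ⟨l₂, hlen₂, hl₂, hprod₂⟩ := exists_length_eq_trdist c b
  rw [inv_one, one_mul] at hprod₁
  have hl : ∀ t ∈ l₁ ++ l₂, t.IsSwap := List.forall_mem_append.mpr ⟨hl₁, hl₂⟩
  have hprod : (l₁ ++ l₂).prod = b := by
    rw [List.prod_append, hprod₁, hprod₂, mul_inv_cancel_left]
  have hlen : (l₁ ++ l₂).length + (cycleMins b).length ≤ n := by
    rw [List.length_append]
    omega
  exact hprod₁ ▸ Subgroup.list_prod_mem _ fun t ht =>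
    mem_cycleStabilizer_of_mem_of_length_add_le hl hprod hlen (List.mem_append_left _ ht)

theorem sameCycle_iff_of_mem_cycleStabilizer {g : Perm (Fin n)} (hg : g ∈ cycleStabilizer b)
    (hlen : (cycleMins g).length ≤ (cycleMins b).length) (i j : Fin n) :
    b.SameCycle i j ↔ g.SameCycle i j := by
  rw [length_cycleMins, length_cycleMins] at hlen
  exact ⟨(SameCycle.equivalence g).le_of_card_classMins_le (SameCycle.equivalence b)
    (fun _ _ => SameCycle.of_mem_cycleStabilizer hg) hlen, SameCycle.of_mem_cycleStabilizer hg⟩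

end Geodesics

theorem stmt14 (n : ℕ) (a b u u' w c P x y : Equiv.Perm (Fin n))
    (hP : P = canonPerm n (orderedCycleType (a⁻¹ * b)) 0)
    (hu : IsConjugator P (a⁻¹ * b) u) (hc : c ∈ midpts 1 P)
    (hx : x = a * u * c * u⁻¹) (hy : y = a * u * (c⁻¹ * P) * u⁻¹)
    (hu' : IsConjugator P (c⁻¹ * (c⁻¹ * P)) u')
    (hw : IsConjugator P (x⁻¹ * y) w) :
    w = u * u' := by
  have hbound : trdist 1 P + (cycleMins P).length ≤ n := by
    have := trdist_one_canonPerm_add_length_le (n := n) (orderedCycleType (a⁻¹ * b))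
      (fun _ => one_le_of_mem_orderedCycleType) 0
    rwa [← hP, sum_orderedCycleType, orderedCycleType, List.length_map, ← hu.2,
      List.length_map] at this
  have hcP : c ∈ cycleStabilizer P := mem_cycleStabilizer_of_trdist_add_eq hc.1 hbound
  have hq : c⁻¹ * (c⁻¹ * P) ∈ cycleStabilizer P :=
    mul_mem (inv_mem hcP) (mul_mem (inv_mem hcP) (self_mem_cycleStabilizer P))
  have horbits := sameCycle_iff_of_mem_cycleStabilizer hq (by rw [← hu'.2, List.length_map])
  have hxy : x⁻¹ * y = u * (c⁻¹ * (c⁻¹ * P)) * u⁻¹ := by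
    rw [hx, hy]
    group
  exact hw.unique (hxy ▸ hu'.trans (hu.of_sameCycle_iff horbits))
end

section
/- For each composition mu of n, define delta(c) := u_{c^{-1}c^∨}^{-1} c^{-1} u_{c^{-1}c^∨} for c in Cr(mu). Then delta maps Cr(mu) into Cr(mu); i.e., delta(c) is again a midpoint of e and p_mu, with d(e, delta(c)) = d(e,c) and d(delta(c), p_mu) = d(c, p_mu). -/
open Equiv

/-!
The distance `trdist` is invariant under left translation, and its norm `trdist 1` is invariant
under inversion and conjugation, because inversion and conjugation send transpositions to
transpositions. Writing `δ = u'⁻¹ * c⁻¹ * u'`, this gives `trdist 1 δ = trdist 1 c`, while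
`u' * P * u'⁻¹ = c⁻¹ * c⁻¹ * P` yields `δ⁻¹ * P = u'⁻¹ * (c⁻¹ * P) * u'`, so that
`trdist δ P = trdist c P`. Being a midpoint of `1` and `P` depends only on these two distances.
-/

namespace Equiv.Perm

variable {α : Type*} [DecidableEq α]

theorem IsSwap.conj {σ : Perm α} (hσ : σ.IsSwap) (u : Perm α) : (u⁻¹ * σ * u).IsSwap := by
  obtain ⟨a, b, hab, rfl⟩ := hσ
  refine ⟨u⁻¹ a, u⁻¹ b, fun h => hab (u⁻¹.injective h), ?_⟩
  rw [swap_apply_apply, inv_inv]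

end Equiv.Perm

section WordMetric

variable {n : ℕ}

def swapWordLengths (x : Perm (Fin n)) : Set ℕ :=
  {k | ∃ l : List (Perm (Fin n)), l.length = k ∧ (∀ t ∈ l, t.IsSwap) ∧ l.prod = x}

theorem trdist_eq_sInf_swapWordLengths (a b : Perm (Fin n)) :
    trdist a b = sInf (swapWordLengths (a⁻¹ * b)) := rfl

theorem trdist_eq_trdist_one_inv_mul (a b : Perm (Fin n)) : trdist a b = trdist 1 (a⁻¹ * b) := by
  rw [trdist_eq_sInf_swapWordLengths, trdist_eq_sInf_swapWordLengths, inv_one, one_mul]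

theorem swapWordLengths_subset_inv (x : Perm (Fin n)) :
    swapWordLengths x ⊆ swapWordLengths x⁻¹ := by
  rintro k ⟨l, rfl, hswap, rfl⟩
  have hinv : l.map (·⁻¹) = l :=
    (List.map_congr_left (g := id) fun t ht => by
      obtain ⟨a, b, -, rfl⟩ := hswap t ht
      exact swap_inv a b).trans (List.map_id l)
  refine ⟨l.reverse, List.length_reverse, fun t ht => hswap t (List.mem_reverse.mp ht), ?_⟩
  rw [List.prod_inv_reverse, hinv]

theorem swapWordLengths_subset_conj (u x : Perm (Fin n)) :
    swapWordLengths x ⊆ swapWordLengths (u⁻¹ * x * u) := by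
  rintro k ⟨l, rfl, hswap, rfl⟩
  refine ⟨l.map (MulAut.conj u⁻¹), List.length_map _, ?_, ?_⟩
  · simp only [List.mem_map]
    rintro _ ⟨t, ht, rfl⟩
    simpa [mul_assoc] using (hswap t ht).conj u
  · rw [← map_list_prod]
    simp [mul_assoc]

theorem swapWordLengths_inv (x : Perm (Fin n)) : swapWordLengths x⁻¹ = swapWordLengths x :=
  (swapWordLengths_subset_inv x).antisymm' (by simpa using swapWordLengths_subset_inv x⁻¹)

theorem swapWordLengths_conj (u x : Perm (Fin n)) :
    swapWordLengths (u⁻¹ * x * u) = swapWordLengths x :=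
  (swapWordLengths_subset_conj u x).antisymm' (by
    simpa [mul_assoc] using swapWordLengths_subset_conj u⁻¹ (u⁻¹ * x * u))

theorem trdist_one_inv (x : Perm (Fin n)) : trdist 1 x⁻¹ = trdist 1 x := by
  rw [trdist_eq_sInf_swapWordLengths, trdist_eq_sInf_swapWordLengths, inv_one, one_mul,
    one_mul, swapWordLengths_inv]

theorem trdist_one_conj (u x : Perm (Fin n)) : trdist 1 (u⁻¹ * x * u) = trdist 1 x := by
  rw [trdist_eq_sInf_swapWordLengths, trdist_eq_sInf_swapWordLengths, inv_one, one_mul,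
    one_mul, swapWordLengths_conj]

end WordMetric

theorem stmt15_general (n : ℕ)
    (P c u' : Equiv.Perm (Fin n))
    (hc : c ∈ midpts 1 P)
    (hu' : IsConjugator P (c⁻¹ * (c⁻¹ * P)) u') :
    u'⁻¹ * c⁻¹ * u' ∈ midpts 1 P ∧
    trdist 1 (u'⁻¹ * c⁻¹ * u') = trdist 1 c ∧
    trdist (u'⁻¹ * c⁻¹ * u') P = trdist c P := by
  have hconj : u' * P * u'⁻¹ = c⁻¹ * (c⁻¹ * P) := hu'.1
  have hnorm : trdist 1 (u'⁻¹ * c⁻¹ * u') = trdist 1 c := by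
    rw [trdist_one_conj, trdist_one_inv]
  have hquot : (u'⁻¹ * c⁻¹ * u')⁻¹ * P = u'⁻¹ * (c⁻¹ * P) * u' := by
    calc (u'⁻¹ * c⁻¹ * u')⁻¹ * P = u'⁻¹ * c * (u' * P * u'⁻¹) * u' := by group
      _ = u'⁻¹ * (c⁻¹ * P) * u' := by rw [hconj]; group
  have hdist : trdist (u'⁻¹ * c⁻¹ * u') P = trdist c P := by
    rw [trdist_eq_trdist_one_inv_mul, hquot, trdist_one_conj, ← trdist_eq_trdist_one_inv_mul]
  refine ⟨?_, hnorm, hdist⟩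
  simpa only [midpts, Set.mem_ofPred_eq, hnorm, hdist] using hc

theorem stmt15 (n : ℕ) (μ : List ℕ) (hpos : ∀ x ∈ μ, 0 < x) (hsum : μ.sum = n)
    (P c u' : Equiv.Perm (Fin n)) (hP : P = canonPerm n μ 0)
    (hc : c ∈ midpts 1 P)
    (hu' : IsConjugator P (c⁻¹ * (c⁻¹ * P)) u') :
    u'⁻¹ * c⁻¹ * u' ∈ midpts 1 P ∧
    trdist 1 (u'⁻¹ * c⁻¹ * u') = trdist 1 c ∧
    trdist (u'⁻¹ * c⁻¹ * u') P = trdist c P :=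
  stmt15_general n P c u' hc hu'
end
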